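/- Let n ≥ 1 and let r ≡ 2 (mod 4), r ≥ 2. Then, as polynomials in q, Σ_{π ∈ A_{r,n}} q^{RtlMin_A(π)} = 2^{n−1} · Π_{i=1}^{n} ((r/2)·(q + i − 1) + 1 − q), where, writing π in window notation as (a_1^{[c_1]} ⋯ a_n^{[c_n]}) (so a_i = |π|(i) and c_i is the color at position i), RtlMin_A(π) = #{i : 1 ≤ i ≤ n, a_j > a_i for all j > i, and c_i ∉ {0, r/2}} is the number of colored right-to-left minima whose color is not in {0, r/2}. -/

import Mathlib

open Multiplicative

namespace ACP

/-- The action of `Sₙ` on color vectors by permuting coordinates. -/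
def permAct (r n : ℕ) : Equiv.Perm (Fin n) →* MulAut (Fin n → Multiplicative (ZMod r)) where
  toFun τ :=
    { toFun := fun z => z ∘ τ.symm
      invFun := fun z => z ∘ τ
      left_inv := fun z => by ext i; simp
      right_inv := fun z => by ext i; simp
      map_mul' := fun z w => rfl }
  map_one' := by ext z i; rfl
  map_mul' a b := by ext z i; rfl

/-- The group of colored permutations `G_{r,n} = ℤ_r ≀ Sₙ`. -/
abbrev G (r n : ℕ) : Type := (Fin n → Multiplicative (ZMod r)) ⋊[permAct r n] Equiv.Perm (Fin n)

/-- The Coxeter-like generators: `gen r n 0 = s₀` colors the digit 1 by one color,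
`gen r n i = sᵢ` (for `1 ≤ i ≤ n-1`) is the adjacent transposition `(i, i+1)`. -/
def gen (r n : ℕ) (i : ℕ) : G r n :=
  if h : 0 < i ∧ i < n then
    ⟨1, Equiv.swap ⟨i - 1, by omega⟩ ⟨i, h.2⟩⟩
  else
    ⟨fun j => if (j : ℕ) = 0 then ofAdd (1 : ZMod r) else 1, 1⟩

def zmod2ToUnits : Multiplicative (ZMod 2) →* ℤˣ where
  toFun z := (-1) ^ (toAdd z).val
  map_one' := rfl
  map_mul' := by decide

def csumHom (r n : ℕ) (hr : 2 ∣ r) :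
    (Fin n → Multiplicative (ZMod r)) →* Multiplicative (ZMod 2) where
  toFun z := ofAdd (∑ i, ZMod.castHom hr (ZMod 2) (toAdd (z i)))
  map_one' := by simp
  map_mul' z w := by
    have h : ∀ i, ZMod.castHom hr (ZMod 2) (toAdd ((z * w) i))
        = ZMod.castHom hr (ZMod 2) (toAdd (z i)) + ZMod.castHom hr (ZMod 2) (toAdd (w i)) :=
      fun i => map_add _ _ _
    simp only [h, Finset.sum_add_distrib, ofAdd_add]

/-- The sign character of `G_{r,n}` (for even `r`): sends every Coxeter-like
generator `sᵢ` to `-1`. -/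
noncomputable def sgn (r n : ℕ) (hr : 2 ∣ r) : G r n →* ℤˣ :=
  SemidirectProduct.lift (zmod2ToUnits.comp (csumHom r n hr)) Equiv.Perm.sign
    (by
      intro g
      refine MonoidHom.ext fun z => ?_
      have h1 : ∀ a x : ℤˣ, a * x * a⁻¹ = x := fun a x => by
        rw [mul_comm a x, mul_inv_cancel_right]
      simp only [MonoidHom.comp_apply, MulEquiv.coe_toMonoidHom, MulAut.conj_apply, h1]
      congr 1
      show csumHom r n hr (z ∘ g.symm) = csumHom r n hr z
      unfold csumHom
      simp only [MonoidHom.coe_mk, OneHom.coe_mk]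
      congr 1
      exact Equiv.sum_comp g.symm fun j => ZMod.castHom hr (ZMod 2) (toAdd (z j)))

/-- The group of alternating colored permutations `A_{r,n}`: the kernel of the sign
character of `G_{r,n}`. -/
noncomputable def Arn (r n : ℕ) (hr : 2 ∣ r) : Subgroup (G r n) := (sgn r n hr).ker

/-- The generators of `A_{r,n}`: `agen r n 0 = a₀ = s₀²` and
`agen r n i = aᵢ = s₀^{r/2} sᵢ` for `i ≥ 1`. -/
def agen (r n : ℕ) (i : ℕ) : G r n :=
  if i = 0 then gen r n 0 ^ 2 else gen r n 0 ^ (r / 2) * gen r n i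

/-- The generating set `𝒜 = {a₀, a₁, a₁⁻¹, a₂, …, a_{n-1}}` of `A_{r,n}`. -/
def Aset (r n : ℕ) : Set (G r n) :=
  {x | ∃ i ≤ n - 1, x = agen r n i} ∪ {(agen r n 1)⁻¹}

/-- The Coxeter-like generating set `{s₀, …, s_{n-1}}` of `G_{r,n}`. -/
def Sset (r n : ℕ) : Set (G r n) := {x | ∃ i < n, x = gen r n i}

/-- Word length of `g` with respect to a generating set `B`. -/
noncomputable def wordLength {H : Type*} [Group H] (B : Set H) (g : H) : ℕ :=
  sInf {k | ∃ w : List H, (∀ x ∈ w, x ∈ B) ∧ w.prod = g ∧ w.length = k}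

/-- The element `a₁² ∈ A_{r,n}`. -/
noncomputable def a1sq (r n : ℕ) (hr : 2 ∣ r) : ↥(Arn r n hr) :=
  ⟨agen r n 1 ^ 2, by rw [Arn, MonoidHom.mem_ker, map_pow]; exact Int.units_sq _⟩

/-- The operator `a ⊘ 2` : the residue mod `r/2` of `a/2` (`a` even) or of
`(a + r/2)/2` (`a` odd). -/
def oslash (r a : ℕ) : ℕ :=
  if a % 2 = 0 then (a / 2) % (r / 2) else ((a + r / 2) / 2) % (r / 2)

/-- `z_i(π)`, the color of digit `i+1` of `π`, as a natural number in `{0, …, r-1}`. -/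
def zval (r n : ℕ) (π : G r n) (i : Fin n) : ℕ := (toAdd (π.left i)).val

/-- `csum(π) = Σ z_i(π)`. -/
def csum (r n : ℕ) (π : G r n) : ℕ := ∑ i, zval r n π i

/-- Rank of the colored letter `b^{[c]}` (with `1 ≤ b ≤ n`, `0 ≤ c ≤ r-1`) in the
length order `n^{[r-1]} < ⋯ < 1^{[1]} < 1 < 2 < ⋯ < n`. -/
def rank (r n : ℕ) (b c : ℕ) : ℕ :=
  if c = 0 then n * (r - 1) + (b - 1) else (n - b) * (r - 1) + (r - 1 - c)

/-- Rank (in the length order) of the letter in position `i` of the window of `π`. -/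
def colRank (r n : ℕ) (π : G r n) (i : Fin n) : ℕ :=
  rank r n ((π.right i : ℕ) + 1) (zval r n π (π.right i))

/-- The inversion number of `π ∈ G_{r,n}` with respect to the length order. -/
noncomputable def inv (r n : ℕ) (π : G r n) : ℕ :=
  Nat.card {p : Fin n × Fin n // p.1 < p.2 ∧ colRank r n π p.2 < colRank r n π p.1}

/-- The ordinary inversion number of a permutation. -/
noncomputable def invPerm (n : ℕ) (τ : Equiv.Perm (Fin n)) : ℕ :=
  Nat.card {p : Fin n × Fin n // p.1 < p.2 ∧ τ p.2 < τ p.1}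

/-- The covering map `p : A_{r,n} → G_{r/2,n}`, `p(z, τ) = ((zᵢ ⊘ 2)ᵢ, τ)`. -/
def pmap (r n : ℕ) (π : G r n) : G (r / 2) n :=
  ⟨fun i => ofAdd ((oslash r (zval r n π i) : ZMod (r / 2))), π.right⟩

/-- The section `s : G_{r/2,n} → A_{r,n}`: doubles all colors (mod `r`), adding `r/2`
to the color of the digit `1` when `inv(|π|)` is odd. -/
noncomputable def smap (r n : ℕ) (π : G (r / 2) n) : G r n :=
  ⟨fun d => ofAdd
      (((2 * zval (r / 2) n π d +
        if (d : ℕ) = 0 ∧ invPerm n π.right % 2 = 1 then r / 2 else 0 : ℕ) : ZMod r)),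
   π.right⟩

/-- `c(π) = Σ_{i : z_i(π) ≠ 0} (i - 1)` (digits are `1`-based). -/
def cstat (r n : ℕ) (π : G r n) : ℕ :=
  ∑ i : Fin n, if zval r n π i ≠ 0 then (i : ℕ) else 0

/-- The number of absolute transparent inversions of `π`. -/
noncomputable def tinv (r n : ℕ) (π : G r n) : ℕ :=
  Nat.card {p : Fin n × Fin n //
    zval r n π p.1 = r / 2 ∧ p.2 < p.1 ∧ π.right⁻¹ p.1 < π.right⁻¹ p.2}

/-- The (digit-indexed) Lehmer code `l_i = #{j : j > i, τ⁻¹(i) > τ⁻¹(j)}`. -/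
noncomputable def lehmer (n : ℕ) (τ : Equiv.Perm (Fin n)) (i : Fin n) : ℕ :=
  Nat.card {j : Fin n // i < j ∧ τ⁻¹ j < τ⁻¹ i}


/-- `μ(π)`: the minimum of `β(ω) + n(ω)` over all factorizations
`ω = b₀ s₀^{i₁} b₁ ⋯ s₀^{i_{k+1}} b_{k+1}` of `π`, where each `b_u` is a word in
`s₁, …, s_{n-1}` only, `n(ω)` is the number of letters `sᵢ` with `i ≠ 0`, and
`β(ω) = Σ_u (i_u ⊘ 2)`. -/
noncomputable def mu (r n : ℕ) (π : G r n) : ℕ :=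
  sInf {m | ∃ (b₀ : List ℕ) (L : List (ℕ × List ℕ)),
    (∀ x ∈ b₀, 1 ≤ x ∧ x ≤ n - 1) ∧
    (∀ q ∈ L, ∀ x ∈ q.2, 1 ≤ x ∧ x ≤ n - 1) ∧
    π = (b₀.map (gen r n)).prod *
        (L.map (fun q => gen r n 0 ^ q.1 * (q.2.map (gen r n)).prod)).prod ∧
    m = (L.map (fun q => oslash r q.1)).sum +
        (b₀.length + (L.map (fun q => q.2.length)).sum)}

/-- The flag-inversion number on `A_{r,n}`:
`finv_A(π) = (r/2)·inv(|π|) + Σᵢ (cᵢ(π) ⊘ 2)` where `cᵢ(π) = r - zᵢ(π⁻¹) (mod r)`. -/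
noncomputable def finvA (r n : ℕ) (π : G r n) : ℕ :=
  (r / 2) * invPerm n π.right + ∑ i, oslash r ((r - zval r n π⁻¹ i) % r)

/-- The number of (colored) right-to-left minima of `π` whose color is not in `{0, r/2}`. -/
noncomputable def rtlMinA (r n : ℕ) (π : G r n) : ℕ :=
  Nat.card {i : Fin n // (∀ j : Fin n, i < j → π.right i < π.right j) ∧
    zval r n π (π.right i) ≠ 0 ∧ zval r n π (π.right i) ≠ r / 2}

/-- The defining relators of the Coxeter-like presentation of `A_{r,n}` on generators
`x₀, …, x_{n-1}`. -/
def rels (r n : ℕ) : Set (FreeGroup (Fin n)) :=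
  {w | ∃ i : Fin n, (i : ℕ) = 0 ∧ w = FreeGroup.of i ^ (r / 2)} ∪
  {w | ∃ i : Fin n, (i : ℕ) = 1 ∧ w = FreeGroup.of i ^ 4} ∪
  {w | ∃ i : Fin n, 2 ≤ (i : ℕ) ∧ w = FreeGroup.of i ^ 2} ∪
  {w | ∃ i j : Fin n, (i : ℕ) ≠ 1 ∧ (j : ℕ) ≠ 1 ∧ (i : ℕ) + 1 < (j : ℕ) ∧
    w = FreeGroup.of i * FreeGroup.of j * (FreeGroup.of i)⁻¹ * (FreeGroup.of j)⁻¹} ∪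
  {w | ∃ i j : Fin n, 1 ≤ (i : ℕ) ∧ (j : ℕ) = (i : ℕ) + 1 ∧
    w = (FreeGroup.of i * FreeGroup.of j) ^ 3} ∪
  {w | ∃ i j : Fin n, (i : ℕ) = 0 ∧ (j : ℕ) = 1 ∧
    w = (FreeGroup.of i * FreeGroup.of j) ^ (2 * r)} ∪
  {w | ∃ i j : Fin n, (i : ℕ) = 0 ∧ (j : ℕ) = 1 ∧
    w = (FreeGroup.of i * (FreeGroup.of j)⁻¹) ^ (2 * r)} ∪
  {w | ∃ i j : Fin n, (i : ℕ) = 0 ∧ (j : ℕ) = 1 ∧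
    w = FreeGroup.of i * FreeGroup.of j ^ 2 * (FreeGroup.of i)⁻¹ * (FreeGroup.of j ^ 2)⁻¹} ∪
  {w | ∃ i j : Fin n, (i : ℕ) = 1 ∧ 2 < (j : ℕ) ∧
    w = FreeGroup.of i * FreeGroup.of j * FreeGroup.of i * (FreeGroup.of j)⁻¹}

end ACP

/-!
Adding `r/2` to the color of the digit `1` is an involution of `G_{r,n}`. Since `r/2` is odd it
reverses the sign character, and since `{0, r/2}` is a subgroup of `ℤ_r` it preserves `RtlMin_A`;
hence the sum over `A_{r,n}` is half the sum over `G_{r,n}`. Over `G_{r,n}` the colors are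
independent: a right-to-left minimum of `|π|` contributes `(r - 2) q + 2` and any other position
contributes `r`. Splitting off the first letter of a permutation (it is a right-to-left minimum
iff it is `1`) gives `∑_τ ∏_i (A if i is a right-to-left minimum of τ else B) = ∏_{i<n} (A + i B)`.
-/

instance {N H : Type*} [Group N] [Group H] {φ : H →* MulAut N} [Fintype N] [Fintype H] :
    Fintype (N ⋊[φ] H) :=
  Fintype.ofEquiv _ SemidirectProduct.equivProd.symm

namespace ACP

open Finset

def IsRtlMin {n : ℕ} (τ : Equiv.Perm (Fin n)) (i : Fin n) : Prop := ∀ j, i < j → τ i < τ j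

instance {n : ℕ} (τ : Equiv.Perm (Fin n)) : DecidablePred (IsRtlMin τ) :=
  fun _ => inferInstanceAs (Decidable (∀ _, _))

def consPerm {n : ℕ} (p : Fin (n + 1)) (σ : Equiv.Perm (Fin n)) : Equiv.Perm (Fin (n + 1)) :=
  p.cycleRange.symm * Equiv.Perm.decomposeFin.symm (0, σ)

@[simp]
lemma consPerm_zero {n : ℕ} (p : Fin (n + 1)) (σ : Equiv.Perm (Fin n)) : consPerm p σ 0 = p := by
  simp [consPerm]

@[simp]
lemma consPerm_succ {n : ℕ} (p : Fin (n + 1)) (σ : Equiv.Perm (Fin n)) (i : Fin n) :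
    consPerm p σ i.succ = p.succAbove (σ i) := by
  simp [consPerm, Fin.cycleRange_symm_succ]

lemma consPerm_bijective (n : ℕ) :
    Function.Bijective fun x : Fin (n + 1) × Equiv.Perm (Fin n) => consPerm x.1 x.2 := by
  rw [Fintype.bijective_iff_injective_and_card]
  refine ⟨fun ⟨p, σ⟩ ⟨q, ρ⟩ h => ?_, by simp [Fintype.card_perm, Nat.factorial_succ]⟩
  have hp : p = q := by simpa using congrArg (· 0) h
  subst hp
  have hσ : σ = ρ := Equiv.ext fun i =>
    Fin.succAbove_right_injective (p := p) (by simpa using congrArg (· i.succ) h)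
  rw [hσ]

lemma isRtlMin_consPerm_zero {n : ℕ} (p : Fin (n + 1)) (σ : Equiv.Perm (Fin n)) :
    IsRtlMin (consPerm p σ) 0 ↔ p = 0 := by
  refine ⟨fun h => ?_, fun hp j hj => ?_⟩
  · by_contra hp
    set j := (consPerm p σ).symm 0
    have hj : consPerm p σ j = 0 := Equiv.apply_symm_apply _ _
    have hj0 : j ≠ 0 := fun h0 => hp (by rwa [h0, consPerm_zero] at hj)
    exact Fin.not_lt_zero _ (hj ▸ h j (Fin.pos_iff_ne_zero.2 hj0))
  · obtain ⟨k, rfl⟩ := Fin.exists_succ_eq.2 hj.ne'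
    simp [hp, Fin.succ_pos]

lemma isRtlMin_consPerm_succ {n : ℕ} (p : Fin (n + 1)) (σ : Equiv.Perm (Fin n)) (i : Fin n) :
    IsRtlMin (consPerm p σ) i.succ ↔ IsRtlMin σ i := by
  simp [IsRtlMin, Fin.forall_fin_succ, Fin.succAbove_lt_succAbove_iff]

theorem sum_prod_ite_isRtlMin {R : Type*} [CommSemiring R] (A B : R) (n : ℕ) :
    ∑ τ : Equiv.Perm (Fin n), ∏ i, (if IsRtlMin τ i then A else B) =
      ∏ i ∈ range n, (A + i * B) := by
  induction n with
  | zero => simp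
  | succ n ih =>
    rw [← (consPerm_bijective n).sum_comp, Fintype.sum_prod_type_right, prod_range_succ, ← ih,
      sum_mul]
    have hfirst : ∑ p : Fin (n + 1), (if p = 0 then A else B) = A + n * B := by
      simp [Fin.sum_univ_succ, Fin.succ_ne_zero]
    simp only [Fin.prod_univ_succ, isRtlMin_consPerm_zero, isRtlMin_consPerm_succ, ← sum_mul,
      hfirst, mul_comm]

lemma sum_prod_comp_perm {ι κ R : Type*} [Fintype ι] [DecidableEq ι] [Fintype κ]
    [CommSemiring R] (τ : Equiv.Perm ι) (g : ι → κ → R) :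
    ∑ z : ι → κ, ∏ i, g i (z (τ i)) = ∏ i, ∑ c, g i c := by
  rw [Fintype.prod_sum, ← (Equiv.arrowCongr τ (Equiv.refl κ)).sum_comp]
  simp

lemma sum_ite_ne_and_ne {α R : Type*} [Fintype α] [DecidableEq α] [CommRing R] {a b : α}
    (hab : a ≠ b) (x : R) :
    ∑ c, (if c ≠ a ∧ c ≠ b then x else 1) = ((Fintype.card α : R) - 2) * x + 2 := by
  have split : ∀ c, (if c ≠ a ∧ c ≠ b then x else 1) =
      x + ((if c = a then 1 - x else 0) + if c = b then 1 - x else 0) := by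
    intro c
    by_cases ha : c = a <;> by_cases hb : c = b <;> simp_all
  simp only [split, sum_add_distrib, sum_ite_eq', mem_univ, if_true, sum_const, card_univ,
    nsmul_eq_mul]
  ring

def IsColorful (r : ℕ) (c : Multiplicative (ZMod r)) : Prop :=
  c ≠ 1 ∧ c ≠ ofAdd ((r / 2 : ℕ) : ZMod r)

instance (r : ℕ) : DecidablePred (IsColorful r) :=
  fun _ => inferInstanceAs (Decidable (_ ∧ _))

lemma isColorful_iff_val (r : ℕ) [NeZero r] (c : Multiplicative (ZMod r)) :
    IsColorful r c ↔ (toAdd c).val ≠ 0 ∧ (toAdd c).val ≠ r / 2 := by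
  have hhalf : r / 2 < r := Nat.div_lt_self (NeZero.pos r) one_lt_two
  refine and_congr (not_congr ?_) (not_congr ?_)
  · rw [ZMod.val_eq_zero]; rfl
  · exact ⟨fun h => by rw [h, toAdd_ofAdd, ZMod.val_natCast_of_lt hhalf],
      fun h => by rw [← ofAdd_toAdd c, ← ZMod.natCast_zmod_val (toAdd c), h]⟩

lemma isColorful_half_mul {r : ℕ} (hr : Even r) (c : Multiplicative (ZMod r)) :
    IsColorful r (ofAdd ((r / 2 : ℕ) : ZMod r) * c) ↔ IsColorful r c := by
  have he : ofAdd ((r / 2 : ℕ) : ZMod r) * ofAdd ((r / 2 : ℕ) : ZMod r) = 1 := by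
    rw [← ofAdd_add, ← Nat.cast_add, ← two_mul, Nat.mul_div_cancel' hr.two_dvd,
      ZMod.natCast_self, ofAdd_zero]
  simp only [IsColorful, ne_eq, mul_eq_one_iff_eq_inv', inv_eq_of_mul_eq_one_right he,
    mul_eq_left]
  tauto

lemma rtlMinA_eq_card (r n : ℕ) [NeZero r] (π : G r n) :
    rtlMinA r n π = #{i | IsRtlMin π.right i ∧ IsColorful r (π.left (π.right i))} := by
  simp only [rtlMinA, Nat.card_eq_fintype_card, Fintype.card_subtype, isColorful_iff_val]
  rfl

theorem sum_pow_rtlMinA {R : Type*} [CommRing R] {r : ℕ} [NeZero r] (hr : 2 ≤ r) (n : ℕ)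
    (x : R) :
    ∑ π : G r n, x ^ rtlMinA r n π =
      ∏ i ∈ range n, (((r : R) - 2) * x + 2 + i * r) := by
  have hhalf : (1 : Multiplicative (ZMod r)) ≠ ofAdd ((r / 2 : ℕ) : ZMod r) := by
    rw [Ne, ← ofAdd_zero, ofAdd.injective.eq_iff, eq_comm, ← ZMod.val_eq_zero,
      ZMod.val_natCast_of_lt (by omega)]
    omega
  have hcolors : ∀ τ : Equiv.Perm (Fin n), ∀ i,
      ∑ c : Multiplicative (ZMod r), (if IsRtlMin τ i ∧ IsColorful r c then x else 1) =
        if IsRtlMin τ i then ((r : R) - 2) * x + 2 else r := by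
    intro τ i
    by_cases hi : IsRtlMin τ i
    · simpa [hi, IsColorful] using sum_ite_ne_and_ne hhalf x
    · simp [hi]
  rw [← sum_prod_ite_isRtlMin, ← SemidirectProduct.equivProd.symm.sum_comp,
    Fintype.sum_prod_type_right]
  refine sum_congr rfl fun τ _ => ?_
  simp only [rtlMinA_eq_card, ← prod_const, prod_filter]
  rw [← prod_congr rfl fun i _ => hcolors τ i]
  exact sum_prod_comp_perm τ fun i c => if IsRtlMin τ i ∧ IsColorful r c then x else 1

theorem two_nsmul_finsum_mem_ker {H M : Type*} [Group H] [Fintype H] [AddCommMonoid M]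
    (χ : H →* ℤˣ) {g : H} (hg : χ g = -1) (f : H → M) (hf : ∀ x, f (g * x) = f x) :
    2 • ∑ᶠ x ∈ (χ.ker : Set H), f x = ∑ x, f x := by
  classical
  have hswap : ∑ x with x ∈ χ.ker, f x = ∑ x with x ∉ χ.ker, f x := by
    refine sum_nbij' (g * ·) (g⁻¹ * ·) (fun x hx => ?_) (fun x hx => ?_) (fun x _ => ?_)
      (fun x _ => ?_) fun x _ => (hf x).symm
    · simp_all [MonoidHom.mem_ker]
    · rcases Int.units_eq_one_or (χ x) with h | h <;> simp_all [MonoidHom.mem_ker]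
    · simp
    · simp
  have hker : (χ.ker : Set H).toFinset = ({x | x ∈ χ.ker} : Finset H) := by ext; simp
  rw [finsum_mem_eq_toFinset_sum, hker, two_nsmul,
    ← sum_filter_add_sum_filter_not univ (· ∈ χ.ker), ← hswap]

def halfShift (r : ℕ) {n : ℕ} (d : Fin n) : G r n :=
  SemidirectProduct.inl (Pi.mulSingle d (ofAdd ((r / 2 : ℕ) : ZMod r)))

lemma sgn_halfShift {r n : ℕ} (hr : r % 4 = 2) (d : Fin n) :
    sgn r n (by omega) (halfShift r d) = -1 := by
  have hodd : ZMod.castHom (by omega) (ZMod 2) ((r / 2 : ℕ) : ZMod r) = 1 := by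
    rw [map_natCast, ← ZMod.natCast_mod, show r / 2 % 2 = 1 by omega, Nat.cast_one]
  have hsum :
      csumHom r n (by omega) (Pi.mulSingle d (ofAdd ((r / 2 : ℕ) : ZMod r))) = ofAdd 1 := by
    simp only [csumHom, MonoidHom.coe_mk, OneHom.coe_mk]
    rw [Fintype.sum_eq_single d fun i hi => by simp [Pi.mulSingle_eq_of_ne hi]]
    simp [hodd]
  simp only [sgn, halfShift, SemidirectProduct.lift_inl, MonoidHom.comp_apply, hsum]
  rfl

lemma rtlMinA_halfShift_mul {r n : ℕ} [NeZero r] (hr : Even r) (d : Fin n) (π : G r n) :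
    rtlMinA r n (halfShift r d * π) = rtlMinA r n π := by
  have hleft : ∀ k, (halfShift r d * π).left k =
      (Pi.mulSingle d (ofAdd ((r / 2 : ℕ) : ZMod r)) : Fin n → Multiplicative (ZMod r)) k *
        π.left k := fun k => by
    simp [halfShift]
  have hcol : ∀ k, IsColorful r ((halfShift r d * π).left k) ↔ IsColorful r (π.left k) := by
    intro k
    rw [hleft]
    by_cases hk : k = d
    · subst hk
      rw [Pi.mulSingle_eq_same, isColorful_half_mul hr]
    · rw [Pi.mulSingle_eq_of_ne hk, one_mul]
  simp only [rtlMinA_eq_card, hcol]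
  rfl

end ACP

open Polynomial in
/-- the generating function of `RtlMin_A` over `A_{r,n}` is
`2^{n-1} Π_{i=1}^{n} ((r/2)(q+i-1) + 1 - q)`. -/
theorem rtlMinA_genfun (r n : ℕ) (hn : 1 ≤ n) (hr : r % 4 = 2) :
    ∑ᶠ π ∈ (ACP.Arn r n (by omega) : Set (ACP.G r n)), (X : ℤ[X]) ^ ACP.rtlMinA r n π =
      2 ^ (n - 1) * ∏ i ∈ Finset.range n,
        (((r / 2 : ℕ) : ℤ[X]) * (X + ((i : ℕ) : ℤ[X])) + 1 - X) := by
  obtain ⟨m, rfl⟩ : ∃ m, n = m + 1 := ⟨n - 1, by omega⟩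
  have : NeZero r := ⟨by omega⟩
  have hfactor : ∀ i ∈ Finset.range (m + 1),
      ((r : ℤ[X]) - 2) * X + 2 + (i : ℤ[X]) * (r : ℤ[X]) =
        2 * (((r / 2 : ℕ) : ℤ[X]) * (X + ((i : ℕ) : ℤ[X])) + 1 - X) := fun i _ => by
    rw [show (r : ℤ[X]) = 2 * ((r / 2 : ℕ) : ℤ[X]) by exact_mod_cast (by omega : r = 2 * (r / 2))]
    ring
  have key := ACP.two_nsmul_finsum_mem_ker _ (ACP.sgn_halfShift hr 0)
    (fun π => (X : ℤ[X]) ^ ACP.rtlMinA r (m + 1) π)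
    fun π => by rw [ACP.rtlMinA_halfShift_mul ⟨r / 2, by omega⟩]
  rw [ACP.sum_pow_rtlMinA (by omega), Finset.prod_congr rfl hfactor, Finset.prod_mul_distrib,
    Finset.prod_const, Finset.card_range, pow_succ', mul_assoc, nsmul_eq_mul, Nat.cast_ofNat] at key
  exact mul_left_cancel₀ two_ne_zero key
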